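/- Let M ∈ ℝ^{n×p} have full column rank, λ ≥ 0, n_u > 0, r ∈ ℝⁿ. Let û = (MᵀM + λ n_u I)⁻¹ Mᵀ r be the ridge estimator and ũ = (M*ᵀM + λ n_u I)⁻¹ M*ᵀ r the core-elements estimator, where M* ∈ ℝ^{n×p} satisfies ‖M − M*‖₂ ≤ ε′ ‖M‖₂ with 0 < ε′ ≤ (1/c)·[1 + (c+1)/((√(1+ε) − 1)·RSSE(û))]⁻¹, c = ‖M‖₂² ‖(MᵀM + λ n_u I)⁻¹‖₂, and RSSE(û) = ‖r − M û‖/‖r‖ > 0. Assume M*ᵀM + λ n_u I is invertible. Then ‖r − M ũ‖² ≤ (1 + ε) ‖r − M û‖². -/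

import Mathlib

open Matrix
open scoped Matrix.Norms.L2Operator

/-- Euclidean norm of a vector in `ℝ^n`. -/
noncomputable def vecNorm {n : ℕ} (v : Fin n → ℝ) : ℝ := Real.sqrt (∑ i, v i ^ 2)

lemma vecNorm_eq {k : ℕ} (v : Fin k → ℝ) :
    vecNorm v = ‖(EuclideanSpace.equiv (Fin k) ℝ).symm v‖ := by
  rw [EuclideanSpace.norm_eq]
  simp [vecNorm, Real.norm_eq_abs, sq_abs]

lemma vecNorm_nonneg {k : ℕ} (v : Fin k → ℝ) : 0 ≤ vecNorm v := Real.sqrt_nonneg _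

lemma vecNorm_sq {k : ℕ} (v : Fin k → ℝ) : vecNorm v ^ 2 = v ⬝ᵥ v := by
  rw [vecNorm, Real.sq_sqrt (by positivity)]
  simp [dotProduct, sq]

lemma vecNorm_add_le {k : ℕ} (a b : Fin k → ℝ) :
    vecNorm (a + b) ≤ vecNorm a + vecNorm b := by
  rw [vecNorm_eq, vecNorm_eq, vecNorm_eq, map_add]
  exact norm_add_le _ _

lemma vecNorm_mulVec_le {k l : ℕ} (A : Matrix (Fin k) (Fin l) ℝ) (x : Fin l → ℝ) :
    vecNorm (A *ᵥ x) ≤ ‖A‖ * vecNorm x := by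
  rw [vecNorm_eq, vecNorm_eq]
  exact A.l2_opNorm_mulVec ((EuclideanSpace.equiv (Fin l) ℝ).symm x)

lemma vecNorm_pos {k : ℕ} {v : Fin k → ℝ} (hv : v ≠ 0) : 0 < vecNorm v := by
  rw [vecNorm, Real.sqrt_pos]
  rcases Function.ne_iff.mp hv with ⟨i, hi⟩
  exact Finset.sum_pos' (fun j _ => by positivity) ⟨i, Finset.mem_univ i, pow_two_pos_of_ne_zero (by simpa using hi)⟩

lemma l2vec_norm_transpose {k l : ℕ} (A : Matrix (Fin k) (Fin l) ℝ) : ‖Aᵀ‖ = ‖A‖ := by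
  have h : Aᵀ = Aᴴ := by ext i j; simp [conjTranspose_apply]
  rw [h, l2_opNorm_conjTranspose]

lemma G_unit {n p : ℕ} {M : Matrix (Fin n) (Fin p) ℝ}
    (hfullrank : LinearIndependent ℝ (fun j : Fin p => Mᵀ j))
    {t : ℝ} (ht : 0 ≤ t) :
    IsUnit (Mᵀ * M + t • (1 : Matrix (Fin p) (Fin p) ℝ)) := by
  set G := Mᵀ * M + t • (1 : Matrix (Fin p) (Fin p) ℝ) with hGdef
  rw [← Matrix.mulVec_injective_iff_isUnit]
  have key : ∀ x, G *ᵥ x = 0 → x = 0 := by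
    intro x hx
    have hGx : G *ᵥ x = Mᵀ *ᵥ (M *ᵥ x) + t • x := by
      simp [hGdef, add_mulVec, mulVec_mulVec, smul_mulVec, one_mulVec]
    have hds : ∀ v : Fin p → ℝ, 0 ≤ v ⬝ᵥ v := fun v => Finset.sum_nonneg fun i _ => mul_self_nonneg _
    have hds' : ∀ v : Fin n → ℝ, 0 ≤ v ⬝ᵥ v := fun v => Finset.sum_nonneg fun i _ => mul_self_nonneg _
    have h0 : (M *ᵥ x) ⬝ᵥ (M *ᵥ x) + t * (x ⬝ᵥ x) = 0 := by
      have h : x ⬝ᵥ (G *ᵥ x) = 0 := by rw [hx, dotProduct_zero]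
      rw [hGx, dotProduct_add, dotProduct_mulVec, vecMul_transpose,
        dotProduct_smul, smul_eq_mul] at h
      exact h
    have hMx : M *ᵥ x = 0 := by
      have h1 : 0 ≤ (M *ᵥ x) ⬝ᵥ (M *ᵥ x) := hds' _
      have h2 : 0 ≤ t * (x ⬝ᵥ x) := mul_nonneg ht (hds _)
      have : (M *ᵥ x) ⬝ᵥ (M *ᵥ x) = 0 := by linarith
      exact (dotProduct_self_eq_zero).mp this
    have hsum : ∑ j, x j • (fun j : Fin p => Mᵀ j) j = 0 := by
      funext i
      have := congrFun hMx i
      simpa [Matrix.mulVec, dotProduct, Finset.sum_apply, mul_comm] using this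
    have := Fintype.linearIndependent_iff.mp hfullrank x hsum
    funext i; exact this i
  intro a b hab
  have := key (a - b) (by rw [mulVec_sub, hab, sub_self])
  exact sub_eq_zero.mp this

set_option maxHeartbeats 1000000 in
/-- Per-iteration `(1+ε)`-approximation guarantee for the core-elements
sketched ridge update (Theorem 1): if `‖M − M*‖₂ ≤ ε′‖M‖₂` with `ε′` small
enough (relative to `c = ‖M‖₂²‖(MᵀM + λ n_u I)⁻¹‖₂` and the relative residual
`RSSE(û) = ‖r − Mû‖/‖r‖`), then the sketched estimator `ũ` satisfies
`‖r − Mũ‖² ≤ (1+ε)‖r − Mû‖²`. -/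
theorem core_elements_one_plus_eps_approximation
    {n p : ℕ} (M Mstar : Matrix (Fin n) (Fin p) ℝ)
    (hfullrank : LinearIndependent ℝ (fun j : Fin p => Mᵀ j))
    (lam nu : ℝ) (hlam : 0 ≤ lam) (hnu : 0 < nu)
    (r : Fin n → ℝ) (hr : r ≠ 0)
    (eps eps' : ℝ) (heps : 0 < eps)
    (G Gstar : Matrix (Fin p) (Fin p) ℝ)
    (hG : G = Mᵀ * M + (lam * nu) • (1 : Matrix (Fin p) (Fin p) ℝ))
    (hGstar : Gstar = Mstarᵀ * M + (lam * nu) • (1 : Matrix (Fin p) (Fin p) ℝ))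
    (hGstarUnit : IsUnit Gstar)
    (uhat util : Fin p → ℝ)
    (huhat : uhat = G⁻¹ *ᵥ (Mᵀ *ᵥ r))
    (hutil : util = Gstar⁻¹ *ᵥ (Mstarᵀ *ᵥ r))
    (c RSSE : ℝ)
    (hc : c = ‖M‖ ^ 2 * ‖G⁻¹‖)
    (hRSSE : RSSE = vecNorm (r - M *ᵥ uhat) / vecNorm r)
    (hRSSEpos : 0 < RSSE)
    (hsketch : ‖M - Mstar‖ ≤ eps' * ‖M‖)
    (heps'pos : 0 < eps')
    (heps'le : eps' ≤ (1 / c) * (1 + (c + 1) / ((Real.sqrt (1 + eps) - 1) * RSSE))⁻¹) :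
    vecNorm (r - M *ᵥ util) ^ 2 ≤ (1 + eps) * vecNorm (r - M *ᵥ uhat) ^ 2 := by
  -- trivial case p = 0
  rcases Nat.eq_zero_or_pos p with hp | hp
  · subst hp
    have h0 : ∀ v : Fin 0 → ℝ, M *ᵥ v = 0 := by
      intro v; funext i; simp [Matrix.mulVec, dotProduct]
    rw [h0 util, h0 uhat]
    nlinarith [sq_nonneg (vecNorm (r - (0 : Fin n → ℝ)))]
  haveI : Nonempty (Fin p) := ⟨⟨0, hp⟩⟩
  -- basic positivity facts
  have hGUnit : IsUnit G := hG ▸ G_unit hfullrank (mul_nonneg hlam hnu.le)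
  have hGdet : IsUnit G.det := (Matrix.isUnit_iff_isUnit_det G).mp hGUnit
  have hGstardet : IsUnit Gstar.det := (Matrix.isUnit_iff_isUnit_det Gstar).mp hGstarUnit
  have hMne : M ≠ 0 := by
    intro h
    exact hfullrank.ne_zero ⟨0, hp⟩ (by funext i; simp [h])
  have hMnorm : 0 < ‖M‖ := norm_pos_iff.mpr hMne
  have hGinvne : G⁻¹ ≠ 0 := by
    intro h
    have h1 := Matrix.mul_nonsing_inv G hGdet
    rw [h, mul_zero] at h1
    have h2 := congrFun (congrFun h1 ⟨0, hp⟩) ⟨0, hp⟩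
    simp [Matrix.one_apply] at h2
  have hcpos : 0 < c := hc ▸ mul_pos (pow_pos hMnorm 2) (norm_pos_iff.mpr hGinvne)
  have hrpos : 0 < vecNorm r := vecNorm_pos hr
  set ρ := vecNorm (r - M *ᵥ uhat) with hρdef
  have hρpos : 0 < ρ := by
    have h := hRSSEpos
    rw [hRSSE] at h
    rcases div_pos_iff.mp h with ⟨h1, _⟩ | ⟨_, h2⟩
    · exact h1
    · linarith
  set s := Real.sqrt (1 + eps) - 1 with hsdef
  have hs : 0 < s := by
    have h1 : (1 : ℝ) < Real.sqrt (1 + eps) := by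
      have h2 := Real.sqrt_lt_sqrt (le_of_lt one_pos) (by linarith : (1 : ℝ) < 1 + eps)
      rwa [Real.sqrt_one] at h2
    simp only [hsdef]; linarith
  have hsq : (1 + s) ^ 2 = 1 + eps := by
    simp only [hsdef]
    rw [show 1 + (Real.sqrt (1 + eps) - 1) = Real.sqrt (1 + eps) from by ring]
    exact Real.sq_sqrt (by linarith)
  -- the normal equation
  have hGu : G *ᵥ uhat = Mᵀ *ᵥ r := by
    rw [huhat, mulVec_mulVec, Matrix.mul_nonsing_inv _ hGdet, one_mulVec]
  -- RSSE ≤ 1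
  have e1 : r ⬝ᵥ (M *ᵥ uhat) =
      (M *ᵥ uhat) ⬝ᵥ (M *ᵥ uhat) + (lam * nu) * (uhat ⬝ᵥ uhat) := by
    rw [dotProduct_mulVec, ← mulVec_transpose, ← hGu,
      hG, add_mulVec, smul_mulVec, one_mulVec, ← mulVec_mulVec,
      add_dotProduct, smul_dotProduct, smul_eq_mul,
      mulVec_transpose, ← dotProduct_mulVec]
  have hρ2 : ρ ^ 2 + ((M *ᵥ uhat) ⬝ᵥ (M *ᵥ uhat) + 2 * (lam * nu) * (uhat ⬝ᵥ uhat))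
      = vecNorm r ^ 2 := by
    rw [hρdef, vecNorm_sq, vecNorm_sq, sub_dotProduct, dotProduct_sub, dotProduct_sub,
      dotProduct_comm (M *ᵥ uhat) r, e1]
    ring
  have hρler : ρ ≤ vecNorm r := by
    have hnn1 : 0 ≤ (M *ᵥ uhat) ⬝ᵥ (M *ᵥ uhat) :=
      Finset.sum_nonneg fun i _ => mul_self_nonneg _
    have hnn2 : 0 ≤ uhat ⬝ᵥ uhat := Finset.sum_nonneg fun i _ => mul_self_nonneg _
    have h1 : ρ ^ 2 ≤ vecNorm r ^ 2 := by nlinarith [mul_nonneg (mul_nonneg hlam hnu.le) hnn2]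
    nlinarith [hρpos, hrpos]
  have hRle1 : RSSE ≤ 1 := by
    rw [hRSSE, div_le_one hrpos]; exact hρler
  -- t := eps' * c and its bound
  set t := eps' * c with htdef
  have htnn : 0 ≤ t := mul_nonneg heps'pos.le hcpos.le
  have ht1 : t ≤ s / (s + 1) := by
    have hsR : 0 < s * RSSE := mul_pos hs hRSSEpos
    have h1 : t ≤ (1 + (c + 1) / (s * RSSE))⁻¹ := by
      calc t = eps' * c := htdef
        _ ≤ (1 / c) * (1 + (c + 1) / (s * RSSE))⁻¹ * c :=
            mul_le_mul_of_nonneg_right heps'le hcpos.le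
        _ = (1 + (c + 1) / (s * RSSE))⁻¹ := by field_simp
    have h2 : (1 + (c + 1) / (s * RSSE))⁻¹ ≤ s / (s + 1) := by
      have e : 1 + (c + 1) / (s * RSSE) = (s * RSSE + (c + 1)) / (s * RSSE) := by
        field_simp
      rw [e, inv_div, div_le_div_iff₀ (by positivity) (by positivity)]
      nlinarith [mul_le_mul_of_nonneg_left hRle1 hs.le, hcpos, hRSSEpos, hs]
    linarith
  have hsp1 : (0 : ℝ) < s + 1 := by linarith
  have ht1' : t * (s + 1) ≤ s := by
    have h := mul_le_mul_of_nonneg_right ht1 hsp1.le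
    rwa [div_mul_cancel₀ _ (ne_of_gt hsp1)] at h
  have htlt1 : t < 1 := by
    have : s / (s + 1) < 1 := (div_lt_one (by linarith)).mpr (by linarith)
    linarith
  have h1mtpos : 0 < 1 - t := by linarith
  -- matrix identities
  have hGdecomp : G = Gstar + (M - Mstar)ᵀ * M := by
    rw [hG, hGstar, transpose_sub, Matrix.sub_mul]
    abel
  have hGstareq : Gstar = G - (M - Mstar)ᵀ * M := by rw [hGdecomp]; abel
  have hGsu2 : Gstar *ᵥ util = Mstarᵀ *ᵥ r := by
    rw [hutil, mulVec_mulVec, Matrix.mul_nonsing_inv _ hGstardet, one_mulVec]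
  have hGstaru : Gstar *ᵥ (uhat - util) = (M - Mstar)ᵀ *ᵥ (r - M *ᵥ uhat) := by
    rw [mulVec_sub, hGsu2, hGstareq, sub_mulVec, hGu, ← mulVec_mulVec,
      mulVec_sub, transpose_sub, sub_mulVec, sub_mulVec]
    abel
  have huu : uhat - util = Gstar⁻¹ *ᵥ ((M - Mstar)ᵀ *ᵥ (r - M *ᵥ uhat)) := by
    rw [← hGstaru, mulVec_mulVec, Matrix.nonsing_inv_mul _ hGstardet, one_mulVec]
  have hGstarinv : Gstar⁻¹ = G⁻¹ + G⁻¹ * ((M - Mstar)ᵀ * M) * Gstar⁻¹ := by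
    calc Gstar⁻¹ = (G⁻¹ * G) * Gstar⁻¹ := by
          rw [Matrix.nonsing_inv_mul _ hGdet, one_mul]
      _ = G⁻¹ * Gstar * Gstar⁻¹ + G⁻¹ * ((M - Mstar)ᵀ * M) * Gstar⁻¹ := by
          rw [hGdecomp, mul_add, add_mul]
      _ = G⁻¹ + G⁻¹ * ((M - Mstar)ᵀ * M) * Gstar⁻¹ := by
          rw [mul_assoc G⁻¹ Gstar, Matrix.mul_nonsing_inv _ hGstardet, mul_one]
  -- norm bound for Gstar⁻¹
  have hEt : ‖(M - Mstar)ᵀ‖ ≤ eps' * ‖M‖ := by rw [l2vec_norm_transpose]; exact hsketch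
  have hB : ‖(M - Mstar)ᵀ * M‖ ≤ eps' * ‖M‖ ^ 2 := by
    calc ‖(M - Mstar)ᵀ * M‖ ≤ ‖(M - Mstar)ᵀ‖ * ‖M‖ := Matrix.l2_opNorm_mul _ _
      _ ≤ (eps' * ‖M‖) * ‖M‖ := mul_le_mul_of_nonneg_right hEt (norm_nonneg M)
      _ = eps' * ‖M‖ ^ 2 := by ring
  have hGsnorm : ‖Gstar⁻¹‖ ≤ ‖G⁻¹‖ + t * ‖Gstar⁻¹‖ := by
    calc ‖Gstar⁻¹‖ = ‖G⁻¹ + G⁻¹ * ((M - Mstar)ᵀ * M) * Gstar⁻¹‖ := by rw [← hGstarinv]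
      _ ≤ ‖G⁻¹‖ + ‖G⁻¹ * ((M - Mstar)ᵀ * M) * Gstar⁻¹‖ := norm_add_le _ _
      _ ≤ ‖G⁻¹‖ + t * ‖Gstar⁻¹‖ := by
          have b1 : ‖G⁻¹ * ((M - Mstar)ᵀ * M) * Gstar⁻¹‖ ≤
              ‖G⁻¹ * ((M - Mstar)ᵀ * M)‖ * ‖Gstar⁻¹‖ := Matrix.l2_opNorm_mul _ _
          have b2 : ‖G⁻¹ * ((M - Mstar)ᵀ * M)‖ ≤ ‖G⁻¹‖ * ‖(M - Mstar)ᵀ * M‖ :=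
            Matrix.l2_opNorm_mul _ _
          have b3 : ‖G⁻¹‖ * ‖(M - Mstar)ᵀ * M‖ ≤ ‖G⁻¹‖ * (eps' * ‖M‖ ^ 2) :=
            mul_le_mul_of_nonneg_left hB (norm_nonneg _)
          have e : ‖G⁻¹‖ * (eps' * ‖M‖ ^ 2) = t := by rw [htdef, hc]; ring
          nlinarith [norm_nonneg Gstar⁻¹, norm_nonneg (G⁻¹ * ((M - Mstar)ᵀ * M))]
  have h1mt : (1 - t) * ‖Gstar⁻¹‖ ≤ ‖G⁻¹‖ := by
    rw [sub_mul, one_mul]; linarith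
  -- bound on the correction term
  set w := vecNorm (M *ᵥ (uhat - util)) with hwdef
  have hw : w ≤ ‖M‖ * (‖Gstar⁻¹‖ * (eps' * ‖M‖ * ρ)) := by
    have c1 : vecNorm ((M - Mstar)ᵀ *ᵥ (r - M *ᵥ uhat)) ≤ eps' * ‖M‖ * ρ := by
      calc vecNorm ((M - Mstar)ᵀ *ᵥ (r - M *ᵥ uhat)) ≤ ‖(M - Mstar)ᵀ‖ * ρ :=
            vecNorm_mulVec_le _ _
        _ ≤ eps' * ‖M‖ * ρ := mul_le_mul_of_nonneg_right hEt hρpos.le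
    have c2 : vecNorm (uhat - util) ≤ ‖Gstar⁻¹‖ * (eps' * ‖M‖ * ρ) := by
      rw [huu]
      calc vecNorm (Gstar⁻¹ *ᵥ ((M - Mstar)ᵀ *ᵥ (r - M *ᵥ uhat)))
          ≤ ‖Gstar⁻¹‖ * vecNorm ((M - Mstar)ᵀ *ᵥ (r - M *ᵥ uhat)) := vecNorm_mulVec_le _ _
        _ ≤ ‖Gstar⁻¹‖ * (eps' * ‖M‖ * ρ) := mul_le_mul_of_nonneg_left c1 (norm_nonneg _)
    calc w ≤ ‖M‖ * vecNorm (uhat - util) := vecNorm_mulVec_le _ _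
      _ ≤ ‖M‖ * (‖Gstar⁻¹‖ * (eps' * ‖M‖ * ρ)) := mul_le_mul_of_nonneg_left c2 (norm_nonneg _)
  have hwt : (1 - t) * w ≤ t * ρ := by
    have d1 : (1 - t) * w ≤ (1 - t) * (‖M‖ * (‖Gstar⁻¹‖ * (eps' * ‖M‖ * ρ))) :=
      mul_le_mul_of_nonneg_left hw h1mtpos.le
    have d2 : (1 - t) * (‖M‖ * (‖Gstar⁻¹‖ * (eps' * ‖M‖ * ρ)))
        = ((1 - t) * ‖Gstar⁻¹‖) * (eps' * ‖M‖ ^ 2 * ρ) := by ring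
    have d3 : ((1 - t) * ‖Gstar⁻¹‖) * (eps' * ‖M‖ ^ 2 * ρ) ≤ ‖G⁻¹‖ * (eps' * ‖M‖ ^ 2 * ρ) :=
      mul_le_mul_of_nonneg_right h1mt (by positivity)
    have d4 : ‖G⁻¹‖ * (eps' * ‖M‖ ^ 2 * ρ) = t * ρ := by rw [htdef, hc]; ring
    linarith
  -- final assembly
  set N := vecNorm (r - M *ᵥ util) with hNdef
  have hNnn : 0 ≤ N := vecNorm_nonneg _
  have hN : N ≤ ρ + w := by
    have e : r - M *ᵥ util = (r - M *ᵥ uhat) + M *ᵥ (uhat - util) := by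
      rw [mulVec_sub]; abel
    rw [hNdef, e]
    exact vecNorm_add_le _ _
  have e3 : (1 - t) * N ≤ ρ := by
    nlinarith [mul_le_mul_of_nonneg_left hN h1mtpos.le, hwt]
  have e4 : N ≤ (1 + s) * ρ := by
    nlinarith [e3, mul_le_mul_of_nonneg_right ht1' hρpos.le, hρpos, h1mtpos]
  calc N ^ 2 ≤ ((1 + s) * ρ) ^ 2 := pow_le_pow_left₀ hNnn e4 2
    _ = (1 + eps) * ρ ^ 2 := by rw [mul_pow, hsq]
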